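/- Let three players have measures on [0,1]: μ₁ = Lebesgue measure, and μ₂ = μ₃ = uniform measure on (0.4, 0.6) (density 5 on (0.4,0.6), 0 elsewhere). The contiguous allocation A₁ = (0,1/3), A₂ = (1/3,1/2), A₃ = (1/2,1) gives values μ₁(A₁) = 1/3, μ₂(A₂) = 1/2, μ₃(A₃) = 1/2, while the allocation B₁ = (0, 0.4), B₂ = (0.4, 0.5), B₃ = (0.5, 1) gives μ₁(B₁) = 0.4 > 1/3, μ₂(B₂) = 1/2, μ₃(B₃) = 1/2. Hence the first allocation is not strongly Pareto optimal among allocations using two cuts. -/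

import Mathlib

/-! The cut at `1/3` hands player 1 part of `(0, 0.4)`, which players 2 and 3 do not value at
all. Moving the first cut to `0.4` and the second to `0.5` keeps each of players 2 and 3 at
half of `(0.4, 0.6)` while player 1's share grows from `1/3` to `0.4`. -/

open MeasureTheory ENNReal

/-- Player 1's measure: Lebesgue on `[0,1]`. -/
noncomputable def mu1 : Measure ℝ := volume.restrict (Set.Icc (0:ℝ) 1)

/-- Players 2 and 3: uniform on `(0.4, 0.6)` (density 5 there, 0 elsewhere). -/
noncomputable def mu23 : Measure ℝ :=
  volume.withDensity (Set.indicator (Set.Ioo (0.4 : ℝ) 0.6) (fun _ => (5 : ℝ≥0∞)))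

/-- Strong Pareto optimality among two-cut (contiguous) allocations: no assignment of
the three intervals determined by two cuts is at least as good for every player and
strictly better for some player. -/
def StronglyPOTwoCut (ν₁ ν₂ ν₃ : Measure ℝ) (A₁ A₂ A₃ : Set ℝ) : Prop :=
  ¬ ∃ s t : ℝ, ∃ B₁ B₂ B₃ : Set ℝ, 0 ≤ s ∧ s ≤ t ∧ t ≤ 1 ∧
      ({B₁, B₂, B₃} : Set (Set ℝ)) = {Set.Ioo 0 s, Set.Ioo s t, Set.Ioo t 1} ∧
      ν₁ A₁ ≤ ν₁ B₁ ∧ ν₂ A₂ ≤ ν₂ B₂ ∧ ν₃ A₃ ≤ ν₃ B₃ ∧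
      (ν₁ A₁ < ν₁ B₁ ∨ ν₂ A₂ < ν₂ B₂ ∨ ν₃ A₃ < ν₃ B₃)

lemma ENNReal.ofReal_one_div {x : ℝ} (hx : 0 < x) :
    ENNReal.ofReal (1 / x) = 1 / ENNReal.ofReal x := by
  rw [one_div, one_div, ENNReal.ofReal_inv_of_pos hx]

lemma mu1_Ioo {a b : ℝ} (ha : 0 ≤ a) (hb : b ≤ 1) :
    mu1 (Set.Ioo a b) = ENNReal.ofReal (b - a) := by
  rw [mu1, Measure.restrict_apply measurableSet_Ioo,
    Set.inter_eq_left.mpr (Set.Ioo_subset_Icc_self.trans (Set.Icc_subset_Icc ha hb)),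
    Real.volume_Ioo]

lemma mu23_Ioo (a b : ℝ) :
    mu23 (Set.Ioo a b) = ENNReal.ofReal (5 * (min 0.6 b - max 0.4 a)) := by
  rw [mu23, withDensity_apply _ measurableSet_Ioo, lintegral_indicator measurableSet_Ioo,
    Measure.restrict_restrict measurableSet_Ioo, setLIntegral_const, Set.Ioo_inter_Ioo,
    Real.volume_Ioo, ENNReal.ofReal_mul (by norm_num), ENNReal.ofReal_ofNat]

lemma not_stronglyPOTwoCut_of_dominated {ν₁ ν₂ ν₃ : Measure ℝ} {A₁ A₂ A₃ : Set ℝ} {s t : ℝ}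
    (hs : 0 ≤ s) (hst : s ≤ t) (ht : t ≤ 1)
    (h₁ : ν₁ A₁ ≤ ν₁ (Set.Ioo 0 s)) (h₂ : ν₂ A₂ ≤ ν₂ (Set.Ioo s t))
    (h₃ : ν₃ A₃ ≤ ν₃ (Set.Ioo t 1))
    (hlt : ν₁ A₁ < ν₁ (Set.Ioo 0 s) ∨ ν₂ A₂ < ν₂ (Set.Ioo s t) ∨ ν₃ A₃ < ν₃ (Set.Ioo t 1)) :
    ¬ StronglyPOTwoCut ν₁ ν₂ ν₃ A₁ A₂ A₃ :=
  not_not_intro ⟨s, t, _, _, _, hs, hst, ht, rfl, h₁, h₂, h₃, hlt⟩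

theorem stmt_9 :
    mu1 (Set.Ioo (0:ℝ) (1/3)) = 1/3 ∧
    mu23 (Set.Ioo (1/3 : ℝ) (1/2)) = 1/2 ∧
    mu23 (Set.Ioo (1/2 : ℝ) 1) = 1/2 ∧
    mu1 (Set.Ioo (0:ℝ) 0.4) = ENNReal.ofReal 0.4 ∧
    (1/3 : ℝ≥0∞) < ENNReal.ofReal 0.4 ∧
    mu23 (Set.Ioo (0.4 : ℝ) 0.5) = 1/2 ∧
    mu23 (Set.Ioo (0.5 : ℝ) 1) = 1/2 ∧
    ¬ StronglyPOTwoCut mu1 mu23 mu23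
        (Set.Ioo (0:ℝ) (1/3)) (Set.Ioo (1/3 : ℝ) (1/2)) (Set.Ioo (1/2 : ℝ) 1) := by
  have hA₁ : mu1 (Set.Ioo (0:ℝ) (1/3)) = 1/3 := by
    rw [mu1_Ioo le_rfl (by norm_num)]; norm_num [ENNReal.ofReal_one_div]
  have hA₂ : mu23 (Set.Ioo (1/3 : ℝ) (1/2)) = 1/2 := by
    norm_num [mu23_Ioo, ENNReal.ofReal_one_div]
  have hA₃ : mu23 (Set.Ioo (1/2 : ℝ) 1) = 1/2 := by
    norm_num [mu23_Ioo, ENNReal.ofReal_one_div]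
  have hB₁ : mu1 (Set.Ioo (0:ℝ) 0.4) = ENNReal.ofReal 0.4 := by
    rw [mu1_Ioo le_rfl (by norm_num), sub_zero]
  have hgain : (1/3 : ℝ≥0∞) < ENNReal.ofReal 0.4 := by
    rw [ENNReal.lt_ofReal_iff_toReal_lt (by norm_num)]; norm_num
  have hB₂ : mu23 (Set.Ioo (0.4 : ℝ) 0.5) = 1/2 := by
    norm_num [mu23_Ioo, ENNReal.ofReal_one_div]
  have hB₃ : mu23 (Set.Ioo (0.5 : ℝ) 1) = 1/2 := by
    norm_num [mu23_Ioo, ENNReal.ofReal_one_div]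
  refine ⟨hA₁, hA₂, hA₃, hB₁, hgain, hB₂, hB₃, ?_⟩
  have hlt : mu1 (Set.Ioo (0:ℝ) (1/3)) < mu1 (Set.Ioo 0 0.4) := by rwa [hA₁, hB₁]
  exact not_stronglyPOTwoCut_of_dominated (s := 0.4) (t := 0.5) (by norm_num) (by norm_num)
    (by norm_num) hlt.le (by rw [hA₂, hB₂]) (by rw [hA₃, hB₃]) (Or.inl hlt)
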